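/- With Q_d(p) = ∑_{|α^{(i)}| ≤ p, |α^{(j)}| ≤ p} ∏_{k=1}^{d} (α_k^{(i)} + α_k^{(j)} + 1) (sums over multi-indices in ℕ^d of total degree at most p), one has Q_d(p) / p^{3d} → C(4d, 2d) / (3d)! as p → ∞. -/

import Mathlib

/-!
Allowing different degree bounds `p` and `q` for the two multi-indices (`QdPair d p q`),
peeling off the first coordinate gives the convolution recursion
`Q_{d+1}(p, q) = ∑_{a + p' = p} ∑_{b + q' = q} (a + b + 1) Q_d(p', q')`.
With the upper Vandermonde identity
`∑_{a + c = n} C(a, j) C(c + m, k) = C(n + m + 1, j + k + 1)` it solves to the closed form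
`Q_d(p, q) = ∑_{r + s = d} C(d, r) C(p + d + s, d + s) C(q + d, d + r)`.
Since `C(p + c, n) ~ p^n / n!`, the quotient `Q_d(p) / p^{3d}` tends to
`∑_{r + s = d} C(d, r) / ((d + s)! (d + r)!)`, which is `C(4d, 2d) / (3d)!` by Vandermonde's
identity.
-/

open Filter

/-- The set of multi-indices `α ∈ ℕ^d` with `|α| ≤ p`. -/
def multiIndexSet (d p : ℕ) : Finset (Fin d → ℕ) :=
  (Fintype.piFinset fun _ : Fin d => Finset.range (p + 1)).filter fun α => ∑ k, α k ≤ p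

/-- `Q_d(p) = ∑_{|α⁽ⁱ⁾|≤p} ∑_{|α⁽ʲ⁾|≤p} ∏_k (α_k⁽ⁱ⁾ + α_k⁽ʲ⁾ + 1)`. -/
def Qd (d p : ℕ) : ℕ :=
  ∑ i ∈ multiIndexSet d p, ∑ j ∈ multiIndexSet d p, ∏ k, (i k + j k + 1)

open Finset Asymptotics
open scoped Nat

theorem sum_antidiagonal_choose_mul_add_choose {m k : ℕ} (hmk : m ≤ k) (n j : ℕ) :
    ∑ x ∈ antidiagonal n, x.1.choose j * (x.2 + m).choose k = (n + m + 1).choose (j + k + 1) := by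
  induction n generalizing j with
  | zero =>
    rcases j with _ | j
    · rcases hmk.eq_or_lt with rfl | hlt
      · simp
      · simp [Nat.choose_eq_zero_of_lt hlt, Nat.choose_eq_zero_of_lt (Nat.succ_lt_succ hlt)]
    · simp [Nat.choose_eq_zero_of_lt (show m + 1 < j + 1 + k + 1 by omega)]
  | succ n ih =>
    rw [Nat.sum_antidiagonal_succ, show n + 1 + m + 1 = (n + m + 1) + 1 by ring]
    rcases j with _ | j
    · have h0 := ih 0
      simp only [Nat.choose_zero_right, one_mul, zero_add] at h0 ⊢
      rw [h0, Nat.choose_succ_succ (n + m + 1) k, add_right_comm n 1 m, add_comm]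
    · simp only [Nat.choose_succ_succ, add_mul, sum_add_distrib, ih, Nat.choose_zero_succ,
        zero_mul, zero_add, add_right_comm j 1 k]

theorem sum_antidiagonal_add_add_one_mul_choose_mul_choose {M m k : ℕ} (hmk : m ≤ k) (p q : ℕ) :
    ∑ x ∈ antidiagonal p, ∑ y ∈ antidiagonal q,
        (x.1 + y.1 + 1) * ((x.2 + M).choose M * (y.2 + m).choose k) =
      (p + M + 2).choose (M + 2) * (q + m + 1).choose (k + 1) +
        (p + M + 1).choose (M + 1) * (q + m + 1).choose (k + 2) := by
  have hx := sum_antidiagonal_choose_mul_add_choose (le_refl M) p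
  have hy := sum_antidiagonal_choose_mul_add_choose hmk q
  calc _ = ∑ x ∈ antidiagonal p, ∑ y ∈ antidiagonal q,
        ((x.1.choose 1 * (x.2 + M).choose M + x.1.choose 0 * (x.2 + M).choose M) *
            (y.1.choose 0 * (y.2 + m).choose k) +
          x.1.choose 0 * (x.2 + M).choose M * (y.1.choose 1 * (y.2 + m).choose k)) := by
        refine sum_congr rfl fun x _ => sum_congr rfl fun y _ => ?_
        simp only [Nat.choose_one_right, Nat.choose_zero_right]
        ring
    _ = _ := by
        simp only [sum_add_distrib, ← sum_mul_sum, hx, hy, zero_add]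
        have hpascal : (p + M + 2).choose (M + 2) =
            (p + M + 1).choose (1 + M + 1) + (p + M + 1).choose (M + 1) := by
          rw [add_comm 1 M, add_comm ((p + M + 1).choose _)]
          exact Nat.choose_succ_succ' _ _
        rw [hpascal, add_comm 1 k]

theorem sum_antidiagonal_choose_mul_choose_add (n m k : ℕ) :
    ∑ x ∈ antidiagonal n, n.choose x.1 * m.choose (k + x.2) = (n + m).choose (n + k) := by
  rw [Nat.add_choose_eq, Nat.sum_antidiagonal_eq_sum_range_succ_mk,
    Nat.sum_antidiagonal_eq_sum_range_succ_mk, show (n + k).succ = n.succ + k by omega,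
    sum_range_add]
  simp only [Nat.choose_eq_zero_of_lt (Nat.lt_add_right _ (Nat.lt_succ_self n)), zero_mul,
    sum_const_zero, add_zero]
  refine sum_congr rfl fun i hi => ?_
  rw [mem_range] at hi
  congr 2
  omega

theorem mem_multiIndexSet {d p : ℕ} {i : Fin d → ℕ} :
    i ∈ multiIndexSet d p ↔ ∑ k, i k ≤ p := by
  simp only [multiIndexSet, mem_filter, Fintype.mem_piFinset, mem_range, and_iff_right_iff_imp]
  exact fun h k =>
    Nat.lt_succ_of_le ((single_le_sum (fun _ _ => Nat.zero_le _) (mem_univ k)).trans h)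

theorem multiIndexSet_zero (p : ℕ) : multiIndexSet 0 p = univ :=
  eq_univ_of_forall fun _ => by simp [mem_multiIndexSet]

theorem sum_multiIndexSet_succ {M : Type*} [AddCommMonoid M] (d p : ℕ)
    (f : (Fin (d + 1) → ℕ) → M) :
    ∑ i ∈ multiIndexSet (d + 1) p, f i =
      ∑ x ∈ antidiagonal p, ∑ t ∈ multiIndexSet d x.2, f (Fin.cons x.1 t) := by
  rw [sum_sigma']
  refine sum_nbij' (fun i => ⟨(i 0, p - i 0), Fin.tail i⟩) (fun x => Fin.cons x.1.1 x.2)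
    ?_ ?_ ?_ ?_ ?_
  · intro i hi
    simp only [mem_sigma, HasAntidiagonal.mem_antidiagonal, mem_multiIndexSet] at hi ⊢
    rw [Fin.sum_univ_succ] at hi
    exact ⟨by omega, by simp only [Fin.tail]; omega⟩
  · rintro ⟨⟨a, b⟩, t⟩ h
    simp only [mem_sigma, HasAntidiagonal.mem_antidiagonal, mem_multiIndexSet] at h ⊢
    rw [Fin.sum_univ_succ]
    simp only [Fin.cons_zero, Fin.cons_succ]
    omega
  · intro i _
    exact Fin.cons_self_tail i
  · rintro ⟨⟨a, b⟩, t⟩ h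
    simp only [mem_sigma, HasAntidiagonal.mem_antidiagonal] at h
    simp only [Fin.cons_zero, Fin.tail_cons, ← h.1, Nat.add_sub_cancel_left]
  · intro i _
    rw [Fin.cons_self_tail]

def QdPair (d p q : ℕ) : ℕ :=
  ∑ i ∈ multiIndexSet d p, ∑ j ∈ multiIndexSet d q, ∏ k, (i k + j k + 1)

theorem QdPair_zero (p q : ℕ) : QdPair 0 p q = 1 := by
  simp [QdPair, multiIndexSet_zero]

theorem QdPair_succ (d p q : ℕ) :
    QdPair (d + 1) p q =
      ∑ x ∈ antidiagonal p, ∑ y ∈ antidiagonal q, (x.1 + y.1 + 1) * QdPair d x.2 y.2 := by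
  rw [QdPair, sum_multiIndexSet_succ]
  refine sum_congr rfl fun x _ => ?_
  rw [sum_comm, sum_multiIndexSet_succ]
  refine sum_congr rfl fun y _ => ?_
  simp only [QdPair, mul_sum, Fin.prod_univ_succ, Fin.cons_zero, Fin.cons_succ]
  exact sum_comm

theorem QdPair_eq_sum (d p q : ℕ) :
    QdPair d p q = ∑ x ∈ antidiagonal d,
      d.choose x.1 * ((p + (d + x.2)).choose (d + x.2) * (q + d).choose (d + x.1)) := by
  induction d generalizing p q with
  | zero => simp [QdPair_zero]
  | succ d ih =>
    have hpascal := sum_antidiagonal_choose_succ_mul (R := ℕ)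
      (fun r s => (p + (d + 1 + s)).choose (d + 1 + s) * (q + (d + 1)).choose (d + 1 + r)) d
    simp only [Nat.cast_id] at hpascal
    rw [hpascal, ← sum_add_distrib, QdPair_succ]
    calc ∑ x ∈ antidiagonal p, ∑ y ∈ antidiagonal q, (x.1 + y.1 + 1) * QdPair d x.2 y.2
        = ∑ z ∈ antidiagonal d, d.choose z.1 * ∑ x ∈ antidiagonal p, ∑ y ∈ antidiagonal q,
            (x.1 + y.1 + 1) *
              ((x.2 + (d + z.2)).choose (d + z.2) * (y.2 + d).choose (d + z.1)) := by
          simp only [ih, mul_sum, mul_left_comm _ (d.choose _)]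
          rw [eq_comm, sum_comm]
          exact sum_congr rfl fun _ _ => sum_comm
      _ = _ := sum_congr rfl fun z hz => by
          rw [sum_antidiagonal_add_add_one_mul_choose_mul_choose (Nat.le_add_right d z.1),
            ← Nat.choose_symm_of_eq_add (HasAntidiagonal.mem_antidiagonal.1 hz).symm]
          ring_nf

theorem tendsto_choose_add_div_pow (c n : ℕ) :
    Tendsto (fun p : ℕ => ((p + c).choose n : ℝ) / (p : ℝ) ^ n) atTop (nhds (n ! : ℝ)⁻¹) := by
  have hshift : (fun p : ℕ => ((p + c : ℕ) : ℝ)) ~[atTop] fun p => (p : ℝ) := by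
    push_cast
    exact IsEquivalent.refl.add_isLittleO
      ((isLittleO_const_id_atTop (c : ℝ)).comp_tendsto tendsto_natCast_atTop_atTop)
  have hchoose : (fun p : ℕ => ((p + c).choose n : ℝ)) ~[atTop] fun p => (p : ℝ) ^ n / n ! :=
    ((isEquivalent_choose n).comp_tendsto (tendsto_add_atTop_nat c)).trans
      ((hshift.pow n).div IsEquivalent.refl)
  refine (hchoose.div (IsEquivalent.refl (u := fun p : ℕ => (p : ℝ) ^ n))).symm.tendsto_nhds ?_
  refine tendsto_const_nhds.congr' ?_
  filter_upwards [eventually_ne_atTop 0] with p hp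
  simp only [Pi.div_apply]
  field_simp

theorem sum_antidiagonal_choose_mul_inv_factorial (d : ℕ) :
    ∑ x ∈ antidiagonal d, (d.choose x.1 : ℝ) * ((d + x.2)! : ℝ)⁻¹ * ((d + x.1)! : ℝ)⁻¹ =
      ((4 * d).choose (2 * d) : ℝ) / (3 * d)! := by
  have hterm : ∀ x ∈ antidiagonal d, (d.choose x.1 : ℝ) * ((d + x.2)! : ℝ)⁻¹ * ((d + x.1)! : ℝ)⁻¹
      = (d.choose x.1 * (3 * d).choose (d + x.2) : ℕ) / (3 * d)! := by
    intro x hx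
    have h3d : 3 * d = (d + x.2) + (d + x.1) := by
      rw [HasAntidiagonal.mem_antidiagonal] at hx; omega
    rw [Nat.cast_mul, h3d, Nat.cast_add_choose]
    field_simp
  rw [sum_congr rfl hterm, ← sum_div, ← Nat.cast_sum, sum_antidiagonal_choose_mul_choose_add,
    show d + 3 * d = 4 * d by ring, show d + d = 2 * d by ring]

theorem Qd_div_pow_eq (d p : ℕ) :
    (Qd d p : ℝ) / (p : ℝ) ^ (3 * d) = ∑ x ∈ antidiagonal d, (d.choose x.1 : ℝ) *
      (((p + (d + x.2)).choose (d + x.2) : ℝ) / (p : ℝ) ^ (d + x.2)) *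
      (((p + d).choose (d + x.1) : ℝ) / (p : ℝ) ^ (d + x.1)) := by
  rw [show Qd d p = QdPair d p p from rfl, QdPair_eq_sum]
  push_cast
  rw [sum_div]
  refine sum_congr rfl fun x hx => ?_
  rw [show 3 * d = (d + x.2) + (d + x.1) by rw [HasAntidiagonal.mem_antidiagonal] at hx; omega,
    pow_add]
  ring

theorem Qd_asymptotics_general (d : ℕ) :
    Tendsto (fun p : ℕ => (Qd d p : ℝ) / (p : ℝ) ^ (3 * d)) atTop
      (nhds (((4 * d).choose (2 * d) : ℝ) / ((3 * d).factorial : ℝ))) := by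
  have hlim := tendsto_finsetSum (antidiagonal d) fun x _ =>
    ((tendsto_choose_add_div_pow (d + x.2) (d + x.2)).const_mul (d.choose x.1 : ℝ)).mul
      (tendsto_choose_add_div_pow d (d + x.1))
  rw [sum_antidiagonal_choose_mul_inv_factorial] at hlim
  exact hlim.congr fun p => (Qd_div_pow_eq d p).symm

/-- `Q_d(p) / p^{3d} → C(4d, 2d) / (3d)!` as `p → ∞`. -/
theorem Qd_asymptotics (d : ℕ) (hd : 1 ≤ d) :
    Tendsto (fun p : ℕ => (Qd d p : ℝ) / (p : ℝ) ^ (3 * d)) atTop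
      (nhds (((4 * d).choose (2 * d) : ℝ) / ((3 * d).factorial : ℝ))) :=
  Qd_asymptotics_general d
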